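/- arXiv:2106.10471 — 6 statements merged into one kernel-verified Lean document; each statement's English description precedes it below -/
import Mathlib

section
/- (Variational lower bound) For every function f : 𝒳 × 𝒴 → ℝ, the quantity Ĩ(f) = Σ_{x,y} P(x,y)·(f(x,y) − log(Σ_{y'} P_Y(y')·exp f(x,y'))) satisfies Ĩ(f) ≤ I(X;Y). -/
open Finset Real

/-- Variational lower bound: for every `f : 𝒳 × 𝒴 → ℝ`,
`Ĩ(f) = ∑ P(x,y)·(f(x,y) − log ∑_{y'} P_Y(y')·exp f(x,y')) ≤ I(X;Y)`. -/
theorem variational_lower_bound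
    {𝒳 𝒴 : Type*} [Fintype 𝒳] [Fintype 𝒴] [Nonempty 𝒳] [Nonempty 𝒴]
    (P : 𝒳 × 𝒴 → ℝ) (hPpos : ∀ z, 0 < P z) (hPsum : ∑ z, P z = 1)
    (f : 𝒳 × 𝒴 → ℝ) :
    (∑ x, ∑ y, P (x, y) *
        (f (x, y) - Real.log (∑ y', (∑ x', P (x', y')) * Real.exp (f (x, y')))))
      ≤ (∑ x, ∑ y, P (x, y) *
          Real.log (P (x, y) / ((∑ y', P (x, y')) * (∑ x', P (x', y))))) := by
  set PX : 𝒳 → ℝ := fun x => ∑ y', P (x, y') with hPXdef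
  set PY : 𝒴 → ℝ := fun y => ∑ x', P (x', y) with hPYdef
  have hPX : ∀ x, 0 < PX x := fun x =>
    Finset.sum_pos (fun y _ => hPpos _) Finset.univ_nonempty
  have hPY : ∀ y, 0 < PY y := fun y =>
    Finset.sum_pos (fun x _ => hPpos _) Finset.univ_nonempty
  set Z : 𝒳 → ℝ := fun x => ∑ y', PY y' * Real.exp (f (x, y')) with hZdef
  have hZ : ∀ x, 0 < Z x := fun x =>
    Finset.sum_pos (fun y _ => mul_pos (hPY y) (Real.exp_pos _)) Finset.univ_nonempty
  set q : 𝒳 × 𝒴 → ℝ := fun z => PX z.1 * PY z.2 * Real.exp (f z) / Z z.1 with hqdef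
  have hq : ∀ z, 0 < q z := fun z =>
    div_pos (mul_pos (mul_pos (hPX z.1) (hPY z.2)) (Real.exp_pos _)) (hZ z.1)
  have hqsum : ∑ x, ∑ y, q (x, y) = 1 := by
    have hrow : ∀ x : 𝒳, ∑ y, q (x, y) = PX x := by
      intro x
      have h1 : ∑ y, q (x, y) = (∑ y, PX x * PY y * Real.exp (f (x, y))) / Z x := by
        rw [Finset.sum_div]
      have h2 : ∑ y, PX x * PY y * Real.exp (f (x, y)) = PX x * Z x := by
        rw [hZdef, Finset.mul_sum]
        exact Finset.sum_congr rfl fun y _ => by ring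
      rw [h1, h2, mul_div_assoc, div_self (hZ x).ne', mul_one]
    rw [Finset.sum_congr rfl fun x _ => hrow x]
    rw [← hPsum, ← Fintype.sum_prod_type]
  have hPsum' : ∑ x, ∑ y, P (x, y) = 1 := by
    rw [← hPsum, ← Fintype.sum_prod_type]
  have key : ∀ x y, P (x, y) * Real.log (P (x, y) / (PX x * PY y))
      - P (x, y) * (f (x, y) - Real.log (Z x))
      = P (x, y) * Real.log (P (x, y) / q (x, y)) := by
    intro x y
    have hlq : Real.log (q (x, y)) =
        Real.log (PX x) + Real.log (PY y) + f (x, y) - Real.log (Z x) := by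
      rw [hqdef]
      simp only
      rw [Real.log_div (mul_pos (mul_pos (hPX x) (hPY y)) (Real.exp_pos _)).ne' (hZ x).ne',
        Real.log_mul (mul_pos (hPX x) (hPY y)).ne' (Real.exp_pos _).ne',
        Real.log_mul (hPX x).ne' (hPY y).ne', Real.log_exp]
    rw [Real.log_div (hPpos (x, y)).ne' (hq (x, y)).ne',
      Real.log_div (hPpos (x, y)).ne' (mul_pos (hPX x) (hPY y)).ne',
      Real.log_mul (hPX x).ne' (hPY y).ne', hlq]
    ring
  have hge : ∀ x y, P (x, y) - q (x, y) ≤ P (x, y) * Real.log (P (x, y) / q (x, y)) := by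
    intro x y
    have h := Real.log_le_sub_one_of_pos (div_pos (hq (x, y)) (hPpos (x, y)))
    have hlog : Real.log (P (x, y) / q (x, y)) = - Real.log (q (x, y) / P (x, y)) := by
      rw [Real.log_div (hPpos (x, y)).ne' (hq (x, y)).ne',
        Real.log_div (hq (x, y)).ne' (hPpos (x, y)).ne']
      ring
    rw [hlog]
    have h2 : 1 - q (x, y) / P (x, y) ≤ - Real.log (q (x, y) / P (x, y)) := by linarith
    calc P (x, y) - q (x, y) = P (x, y) * (1 - q (x, y) / P (x, y)) := by
          rw [mul_sub, mul_one, mul_div_cancel₀ _ (hPpos (x, y)).ne']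
      _ ≤ P (x, y) * (- Real.log (q (x, y) / P (x, y))) :=
          mul_le_mul_of_nonneg_left h2 (hPpos (x, y)).le
  have main : 0 ≤ ∑ x, ∑ y, (P (x, y) * Real.log (P (x, y) / (PX x * PY y))
      - P (x, y) * (f (x, y) - Real.log (Z x))) := by
    have : ∑ x, ∑ y, (P (x, y) * Real.log (P (x, y) / (PX x * PY y))
        - P (x, y) * (f (x, y) - Real.log (Z x)))
        = ∑ x, ∑ y, P (x, y) * Real.log (P (x, y) / q (x, y)) := by
      exact Finset.sum_congr rfl fun x _ => Finset.sum_congr rfl fun y _ => key x y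
    rw [this]
    have hle : ∑ x, ∑ y, (P (x, y) - q (x, y))
        ≤ ∑ x, ∑ y, P (x, y) * Real.log (P (x, y) / q (x, y)) :=
      Finset.sum_le_sum fun x _ => Finset.sum_le_sum fun y _ => hge x y
    have hzero : ∑ x, ∑ y, (P (x, y) - q (x, y)) = 0 := by
      simp only [Finset.sum_sub_distrib, hPsum', hqsum]
      ring
    linarith
  simp only [hPXdef, hPYdef, hZdef, Finset.sum_sub_distrib] at main
  linarith
end

section
/- (Tightness of the variational bound) The supremum of Ĩ(f) over all functions f : 𝒳 × 𝒴 → ℝ equals I(X;Y), and it is attained by the pointwise mutual information f*(x,y) = log(P(x,y)/(P_X(x)·P_Y(y))). -/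
set_option maxHeartbeats 1000000


open Finset Real

lemma gibbs_aux {ι : Type*} [Fintype ι] (p q : ι → ℝ) (hp : ∀ i, 0 < p i)
    (hq : ∀ i, 0 < q i) (hsum : ∑ i, q i ≤ ∑ i, p i) :
    ∑ i, p i * Real.log (q i / p i) ≤ 0 := by
  have h : ∀ i, p i * Real.log (q i / p i) ≤ q i - p i := by
    intro i
    have h1 : Real.log (q i / p i) ≤ q i / p i - 1 :=
      Real.log_le_sub_one_of_pos (div_pos (hq i) (hp i))
    have h2 := mul_le_mul_of_nonneg_left h1 (hp i).le
    calc p i * Real.log (q i / p i) ≤ p i * (q i / p i - 1) := h2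
      _ = q i - p i := by
        rw [mul_sub, mul_one, mul_div_cancel₀ _ (hp i).ne']
  calc ∑ i, p i * Real.log (q i / p i) ≤ ∑ i, (q i - p i) :=
        Finset.sum_le_sum fun i _ => h i
    _ ≤ 0 := by rw [Finset.sum_sub_distrib]; linarith

/-- Tightness of the variational bound: the supremum of `Ĩ(f)` over all
`f : 𝒳 × 𝒴 → ℝ` equals `I(X;Y)`, attained by the pointwise mutual information
`f*(x,y) = log (P(x,y)/(P_X(x)·P_Y(y)))`. -/
theorem variational_bound_tight
    {𝒳 𝒴 : Type*} [Fintype 𝒳] [Fintype 𝒴] [Nonempty 𝒳] [Nonempty 𝒴]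
    (P : 𝒳 × 𝒴 → ℝ) (hPpos : ∀ z, 0 < P z) (hPsum : ∑ z, P z = 1) :
    sSup {r : ℝ | ∃ f : 𝒳 × 𝒴 → ℝ,
        r = ∑ x, ∑ y, P (x, y) *
          (f (x, y) - Real.log (∑ y', (∑ x', P (x', y')) * Real.exp (f (x, y'))))}
      = (∑ x, ∑ y, P (x, y) *
          Real.log (P (x, y) / ((∑ y', P (x, y')) * (∑ x', P (x', y)))))
    ∧
    (∑ x, ∑ y, P (x, y) *
        ((fun z : 𝒳 × 𝒴 =>
            Real.log (P z / ((∑ y', P (z.1, y')) * (∑ x', P (x', z.2))))) (x, y)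
          - Real.log (∑ y', (∑ x', P (x', y')) *
              Real.exp ((fun z : 𝒳 × 𝒴 =>
                Real.log (P z / ((∑ y'', P (z.1, y'')) * (∑ x'', P (x'', z.2))))) (x, y')))))
      = (∑ x, ∑ y, P (x, y) *
          Real.log (P (x, y) / ((∑ y', P (x, y')) * (∑ x', P (x', y))))) := by
  set PX : 𝒳 → ℝ := fun x => ∑ y', P (x, y') with hPX
  set PY : 𝒴 → ℝ := fun y => ∑ x', P (x', y) with hPY
  have hPXpos : ∀ x, 0 < PX x := fun x =>
    Finset.sum_pos (fun y _ => hPpos (x, y)) Finset.univ_nonempty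
  have hPYpos : ∀ y, 0 < PY y := fun y =>
    Finset.sum_pos (fun x _ => hPpos (x, y)) Finset.univ_nonempty
  have hPXsum : ∑ x, PX x = 1 := by
    rw [← hPsum, Fintype.sum_prod_type]
  -- f* : the pointwise mutual information
  set fstar : 𝒳 × 𝒴 → ℝ :=
    fun z => Real.log (P z / (PX z.1 * PY z.2)) with hfstar
  have hratpos : ∀ z : 𝒳 × 𝒴, 0 < P z / (PX z.1 * PY z.2) := fun z =>
    div_pos (hPpos z) (mul_pos (hPXpos z.1) (hPYpos z.2))
  -- the partition function at f* is 1
  have hZstar : ∀ x, (∑ y', PY y' * Real.exp (fstar (x, y'))) = 1 := by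
    intro x
    have : ∀ y', PY y' * Real.exp (fstar (x, y')) = P (x, y') / PX x := by
      intro y'
      rw [hfstar, Real.exp_log (hratpos (x, y'))]
      field_simp [(hPYpos y').ne', (hPXpos x).ne']
    rw [Finset.sum_congr rfl fun y' _ => this y', ← Finset.sum_div, hPX]
    exact div_self (hPXpos x).ne'
  -- second conjunct
  have h2 :
    (∑ x, ∑ y, P (x, y) *
        ((fun z : 𝒳 × 𝒴 =>
            Real.log (P z / ((∑ y', P (z.1, y')) * (∑ x', P (x', z.2))))) (x, y)
          - Real.log (∑ y', (∑ x', P (x', y')) *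
              Real.exp ((fun z : 𝒳 × 𝒴 =>
                Real.log (P z / ((∑ y'', P (z.1, y'')) * (∑ x'', P (x'', z.2))))) (x, y')))))
      = (∑ x, ∑ y, P (x, y) *
          Real.log (P (x, y) / ((∑ y', P (x, y')) * (∑ x', P (x', y))))) := by
    refine Finset.sum_congr rfl fun x _ => Finset.sum_congr rfl fun y _ => ?_
    have := hZstar x
    simp only [hfstar, hPX, hPY] at this ⊢
    rw [this, Real.log_one]
    ring
  refine ⟨?_, h2⟩
  -- the target value I
  set I : ℝ := ∑ x, ∑ y, P (x, y) *
      Real.log (P (x, y) / ((∑ y', P (x, y')) * (∑ x', P (x', y)))) with hI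
  have hmem : I ∈ {r : ℝ | ∃ f : 𝒳 × 𝒴 → ℝ,
        r = ∑ x, ∑ y, P (x, y) *
          (f (x, y) - Real.log (∑ y', (∑ x', P (x', y')) * Real.exp (f (x, y'))))} := by
    exact ⟨(fun z : 𝒳 × 𝒴 =>
      Real.log (P z / ((∑ y'', P (z.1, y'')) * (∑ x'', P (x'', z.2))))), h2.symm⟩
  -- upper bound
  have hub : ∀ r ∈ {r : ℝ | ∃ f : 𝒳 × 𝒴 → ℝ,
        r = ∑ x, ∑ y, P (x, y) *
          (f (x, y) - Real.log (∑ y', (∑ x', P (x', y')) * Real.exp (f (x, y'))))},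
      r ≤ I := by
    rintro r ⟨f, rfl⟩
    set Z : 𝒳 → ℝ := fun x => ∑ y', PY y' * Real.exp (f (x, y')) with hZ
    have hZpos : ∀ x, 0 < Z x := fun x =>
      Finset.sum_pos (fun y _ => mul_pos (hPYpos y) (Real.exp_pos _))
        Finset.univ_nonempty
    set q : 𝒳 × 𝒴 → ℝ :=
      fun z => PX z.1 * PY z.2 * Real.exp (f z) / Z z.1 with hq
    have hqpos : ∀ z, 0 < q z := fun z =>
      div_pos (mul_pos (mul_pos (hPXpos z.1) (hPYpos z.2)) (Real.exp_pos _))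
        (hZpos z.1)
    have hqsum : ∑ z, q z = 1 := by
      rw [Fintype.sum_prod_type]
      have : ∀ x, ∑ y, q (x, y) = PX x := by
        intro x
        have : ∀ y, q (x, y) = PX x / Z x * (PY y * Real.exp (f (x, y))) := by
          intro y; rw [hq]; ring
        rw [Finset.sum_congr rfl fun y _ => this y, ← Finset.mul_sum]
        have hzx : (∑ i, PY i * Real.exp (f (x, i))) = Z x := rfl
        rw [hzx, div_mul_cancel₀ _ (hZpos x).ne']
      rw [Finset.sum_congr rfl fun x _ => this x, hPXsum]
    have key : ∀ z : 𝒳 × 𝒴,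
        P z * (f z - Real.log (Z z.1)) - P z * Real.log (P z / (PX z.1 * PY z.2))
          = P z * Real.log (q z / P z) := by
      intro z
      have hlogq : Real.log (q z) =
          Real.log (PX z.1) + Real.log (PY z.2) + f z - Real.log (Z z.1) := by
        rw [hq, Real.log_div
            (mul_pos (mul_pos (hPXpos z.1) (hPYpos z.2)) (Real.exp_pos _)).ne'
            (hZpos z.1).ne',
          Real.log_mul (mul_pos (hPXpos z.1) (hPYpos z.2)).ne' (Real.exp_pos _).ne',
          Real.log_mul (hPXpos z.1).ne' (hPYpos z.2).ne', Real.log_exp]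
      rw [Real.log_div (hqpos z).ne' (hPpos z).ne', hlogq,
        Real.log_div (hPpos z).ne' (mul_pos (hPXpos z.1) (hPYpos z.2)).ne',
        Real.log_mul (hPXpos z.1).ne' (hPYpos z.2).ne']
      ring
    have hgibbs : ∑ z, P z * Real.log (q z / P z) ≤ 0 :=
      gibbs_aux P q hPpos hqpos (by rw [hqsum, hPsum])
    have hdiff :
        (∑ x, ∑ y, P (x, y) *
            (f (x, y) - Real.log (∑ y', (∑ x', P (x', y')) * Real.exp (f (x, y')))))
          - I = ∑ z, P z * Real.log (q z / P z) := by
      rw [hI, ← Finset.sum_sub_distrib, Fintype.sum_prod_type]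
      refine Finset.sum_congr rfl fun x _ => ?_
      rw [← Finset.sum_sub_distrib]
      refine Finset.sum_congr rfl fun y _ => ?_
      have := key (x, y)
      simp only [hPX, hPY, hZ] at this ⊢
      exact this
    linarith [hdiff ▸ hgibbs]
  exact le_antisymm (csSup_le ⟨I, hmem⟩ hub) (le_csSup ⟨I, hub⟩ hmem)
end

section
/- (Theorem 1) Assume the label marginal is uniform, i.e. P_Y(y) = 1/M for every y, where M is the cardinality of 𝒴. Then the infimum over all functions f : 𝒳 × 𝒴 → ℝ of the softmax cross-entropy loss L(f) = −Σ_{x,y} P(x,y)·(f(x,y) − log(Σ_{y'} exp f(x,y'))) equals log M − I(X;Y), and this infimum is attained by f(x,y) = log(P(x,y)/P_X(x)). -/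
open Finset Real

/-- Theorem 1: under a uniform label marginal, the infimum over all
`f : 𝒳 × 𝒴 → ℝ` of the softmax cross-entropy loss equals `log M − I(X;Y)`,
attained by `f(x,y) = log (P(x,y)/P_X(x))`. -/
theorem softmax_cross_entropy_inf_eq_logM_sub_mi
    {𝒳 𝒴 : Type*} [Fintype 𝒳] [Fintype 𝒴] [Nonempty 𝒳] [Nonempty 𝒴]
    (P : 𝒳 × 𝒴 → ℝ) (hPpos : ∀ z, 0 < P z) (hPsum : ∑ z, P z = 1)
    (hUnif : ∀ y, (∑ x', P (x', y)) = 1 / (Fintype.card 𝒴 : ℝ)) :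
    sInf {r : ℝ | ∃ f : 𝒳 × 𝒴 → ℝ,
        r = -(∑ x, ∑ y, P (x, y) *
          (f (x, y) - Real.log (∑ y', Real.exp (f (x, y')))))}
      = Real.log (Fintype.card 𝒴)
        - (∑ x, ∑ y, P (x, y) *
            Real.log (P (x, y) / ((∑ y', P (x, y')) * (∑ x', P (x', y)))))
    ∧
    -(∑ x, ∑ y, P (x, y) *
        (Real.log (P (x, y) / (∑ y', P (x, y')))
          - Real.log (∑ y', Real.exp (Real.log (P (x, y') / (∑ y'', P (x, y'')))))))
      = Real.log (Fintype.card 𝒴)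
        - (∑ x, ∑ y, P (x, y) *
            Real.log (P (x, y) / ((∑ y', P (x, y')) * (∑ x', P (x', y))))) := by
  set M : ℝ := (Fintype.card 𝒴 : ℝ) with hM
  have hMpos : (0:ℝ) < M := by
    simp only [hM, Nat.cast_pos]
    exact Fintype.card_pos
  set pX : 𝒳 → ℝ := fun x => ∑ y', P (x, y') with hpX
  have hpXpos : ∀ x, 0 < pX x := fun x =>
    Finset.sum_pos (fun y _ => hPpos (x, y)) ⟨Classical.arbitrary 𝒴, Finset.mem_univ _⟩
  have hPsum' : ∑ x, ∑ y, P (x, y) = 1 := by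
    rw [← Fintype.sum_prod_type]; exact hPsum
  -- RHS simplification: log M - mi = -(∑∑ P log(P/pX))
  have hRHS : Real.log M
        - (∑ x, ∑ y, P (x, y) *
            Real.log (P (x, y) / ((∑ y', P (x, y')) * (∑ x', P (x', y)))))
      = -(∑ x, ∑ y, P (x, y) * Real.log (P (x, y) / pX x)) := by
    have hterm : ∀ x y, P (x, y) *
        Real.log (P (x, y) / ((∑ y', P (x, y')) * (∑ x', P (x', y))))
        = P (x, y) * Real.log (P (x, y) / pX x) + P (x, y) * Real.log M := by
      intro x y
      rw [hUnif y]
      have h1 : P (x, y) / ((∑ y', P (x, y')) * (1 / M)) = (P (x, y) / pX x) * M := by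
        rw [hpX]; field_simp
      rw [h1, Real.log_mul (ne_of_gt (div_pos (hPpos _) (hpXpos x))) (ne_of_gt hMpos),
        mul_add]
    rw [Finset.sum_congr rfl fun x _ => Finset.sum_congr rfl fun y _ => hterm x y]
    have h2 : ∑ x, ∑ y, (P (x, y) * Real.log (P (x, y) / pX x) + P (x, y) * Real.log M)
        = (∑ x, ∑ y, P (x, y) * Real.log (P (x, y) / pX x)) + Real.log M := by
      simp only [Finset.sum_add_distrib]
      congr 1
      simp only [← Finset.sum_mul]
      rw [hPsum', one_mul]
    rw [h2]; ring
  -- attained value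
  have hAttain : -(∑ x, ∑ y, P (x, y) *
        (Real.log (P (x, y) / (∑ y', P (x, y')))
          - Real.log (∑ y', Real.exp (Real.log (P (x, y') / (∑ y'', P (x, y'')))))))
      = -(∑ x, ∑ y, P (x, y) * Real.log (P (x, y) / pX x)) := by
    have hz : ∀ x, Real.log (∑ y', Real.exp (Real.log (P (x, y') / (∑ y'', P (x, y''))))) = 0 := by
      intro x
      have he : ∀ y', Real.exp (Real.log (P (x, y') / (∑ y'', P (x, y''))))
          = P (x, y') / pX x := fun y' => Real.exp_log (div_pos (hPpos _) (hpXpos x))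
      rw [Finset.sum_congr rfl fun y' _ => he y', ← Finset.sum_div]
      have hps : (∑ i : 𝒴, P (x, i)) = pX x := rfl
      rw [hps, div_self (ne_of_gt (hpXpos x)), Real.log_one]
    congr 1
    exact Finset.sum_congr rfl fun x _ => Finset.sum_congr rfl fun y _ => by
      rw [hz x]; ring_nf; rfl
  -- lower bound (Gibbs inequality)
  have hlb : ∀ r ∈ {r : ℝ | ∃ f : 𝒳 × 𝒴 → ℝ,
        r = -(∑ x, ∑ y, P (x, y) *
          (f (x, y) - Real.log (∑ y', Real.exp (f (x, y')))))},
      -(∑ x, ∑ y, P (x, y) * Real.log (P (x, y) / pX x)) ≤ r := by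
    rintro r ⟨f, rfl⟩
    rw [neg_le_neg_iff]
    apply Finset.sum_le_sum
    intro x _
    set Z : ℝ := ∑ y', Real.exp (f (x, y')) with hZ
    have hZpos : 0 < Z := Finset.sum_pos (fun y _ => Real.exp_pos _)
      ⟨Classical.arbitrary 𝒴, Finset.mem_univ _⟩
    have hkey : ∑ y, (P (x, y) * (f (x, y) - Real.log Z)
        - P (x, y) * Real.log (P (x, y) / pX x)) ≤ 0 := by
      have hle : ∀ y, P (x, y) * (f (x, y) - Real.log Z)
          - P (x, y) * Real.log (P (x, y) / pX x)
          ≤ Real.exp (f (x, y)) / Z * pX x - P (x, y) := by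
        intro y
        have hp : 0 < P (x, y) := hPpos _
        have ht : (0:ℝ) < Real.exp (f (x, y)) / Z * pX x / P (x, y) :=
          div_pos (mul_pos (div_pos (Real.exp_pos _) hZpos) (hpXpos x)) hp
        have hlog := Real.log_le_sub_one_of_pos ht
        have hexp : Real.log (Real.exp (f (x, y)) / Z * pX x / P (x, y))
            = (f (x, y) - Real.log Z) - Real.log (P (x, y) / pX x) := by
          rw [Real.log_div (ne_of_gt (mul_pos (div_pos (Real.exp_pos _) hZpos) (hpXpos x)))
              (ne_of_gt hp),
            Real.log_mul (ne_of_gt (div_pos (Real.exp_pos _) hZpos)) (ne_of_gt (hpXpos x)),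
            Real.log_div (ne_of_gt (Real.exp_pos _)) (ne_of_gt hZpos),
            Real.log_exp, Real.log_div (ne_of_gt hp) (ne_of_gt (hpXpos x))]
          ring
        rw [hexp] at hlog
        have h3 := mul_le_mul_of_nonneg_left hlog (le_of_lt hp)
        calc P (x, y) * (f (x, y) - Real.log Z) - P (x, y) * Real.log (P (x, y) / pX x)
            = P (x, y) * ((f (x, y) - Real.log Z) - Real.log (P (x, y) / pX x)) := by ring
          _ ≤ P (x, y) * (Real.exp (f (x, y)) / Z * pX x / P (x, y) - 1) := h3
          _ = Real.exp (f (x, y)) / Z * pX x - P (x, y) := by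
              rw [mul_sub, mul_one]
              congr 1
              rw [mul_comm, div_mul_cancel₀ _ (ne_of_gt hp)]
      calc ∑ y, (P (x, y) * (f (x, y) - Real.log Z)
            - P (x, y) * Real.log (P (x, y) / pX x))
          ≤ ∑ y, (Real.exp (f (x, y)) / Z * pX x - P (x, y)) :=
            Finset.sum_le_sum fun y _ => hle y
        _ = 0 := by
            rw [Finset.sum_sub_distrib]
            have h4 : ∑ y, Real.exp (f (x, y)) / Z * pX x = pX x := by
              rw [← Finset.sum_mul, ← Finset.sum_div, ← hZ, div_self (ne_of_gt hZpos),
                one_mul]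
            rw [h4]
            simp [hpX]
    rw [Finset.sum_sub_distrib] at hkey
    linarith
  have hmem : -(∑ x, ∑ y, P (x, y) * Real.log (P (x, y) / pX x))
      ∈ {r : ℝ | ∃ f : 𝒳 × 𝒴 → ℝ,
        r = -(∑ x, ∑ y, P (x, y) *
          (f (x, y) - Real.log (∑ y', Real.exp (f (x, y')))))} := by
    refine ⟨fun z => Real.log (P z / (∑ y'', P (z.1, y''))), ?_⟩
    exact hAttain.symm
  refine ⟨?_, by rw [hRHS]; exact hAttain⟩
  rw [hRHS]
  exact le_antisymm (csInf_le ⟨_, fun r hr => hlb r hr⟩ hmem) (le_csInf ⟨_, hmem⟩ hlb)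
end

section
/- (Theorem 2, PC-softmax) The infimum over all functions f : 𝒳 × 𝒴 → ℝ of the probability-corrected softmax cross-entropy loss L_p(f) = −Σ_{x,y} P(x,y)·(f(x,y) − log(Σ_{y'} P_Y(y')·exp f(x,y'))) equals −I(X;Y), and this infimum is attained by the pointwise mutual information f*(x,y) = log(P(x,y)/(P_X(x)·P_Y(y))). In particular the mutual information I(X;Y) equals the negative of this infimum. -/
open Finset Real


section Aux
variable {𝒳 𝒴 : Type*} [Fintype 𝒳] [Fintype 𝒴] [Nonempty 𝒳] [Nonempty 𝒴]

lemma pc_aux_lower (P : 𝒳 × 𝒴 → ℝ) (hPpos : ∀ z, 0 < P z) (hPsum : ∑ z, P z = 1)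
    (f : 𝒳 × 𝒴 → ℝ) :
    ∑ x, ∑ y, P (x, y) *
        (f (x, y) - Real.log (∑ y', (∑ x', P (x', y')) * Real.exp (f (x, y'))))
      ≤ ∑ x, ∑ y, P (x, y) *
          Real.log (P (x, y) / ((∑ y', P (x, y')) * (∑ x', P (x', y)))) := by
  set Px : 𝒳 → ℝ := fun x => ∑ y', P (x, y') with hPxdef
  set Py : 𝒴 → ℝ := fun y => ∑ x', P (x', y) with hPydef
  have hPx : ∀ x, 0 < Px x := fun x => Finset.sum_pos (fun y _ => hPpos _) univ_nonempty
  have hPy : ∀ y, 0 < Py y := fun y => Finset.sum_pos (fun x _ => hPpos _) univ_nonempty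
  set Z : 𝒳 → ℝ := fun x => ∑ y', Py y' * Real.exp (f (x, y')) with hZdef
  have hZ : ∀ x, 0 < Z x := fun x =>
    Finset.sum_pos (fun y _ => mul_pos (hPy y) (Real.exp_pos _)) univ_nonempty
  have key : ∀ x y, P (x, y) * (f (x, y) - Real.log (Z x))
      ≤ P (x, y) * Real.log (P (x, y) / (Px x * Py y))
        - (P (x, y) - Px x * Py y * Real.exp (f (x, y)) / Z x) := by
    intro x y
    have hP := hPpos (x, y)
    have h1pos : (0:ℝ) < P (x, y) / (Px x * Py y) :=
      div_pos hP (mul_pos (hPx x) (hPy y))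
    have h2pos : (0:ℝ) < Z x / Real.exp (f (x, y)) := div_pos (hZ x) (Real.exp_pos _)
    set t : ℝ := P (x, y) / (Px x * Py y) * (Z x / Real.exp (f (x, y))) with ht
    have htpos : 0 < t := mul_pos h1pos h2pos
    have hlogt : Real.log t
        = Real.log (P (x, y) / (Px x * Py y)) + (Real.log (Z x) - f (x, y)) := by
      rw [ht, Real.log_mul (ne_of_gt h1pos) (ne_of_gt h2pos),
        Real.log_div (ne_of_gt (hZ x)) (Real.exp_ne_zero _), Real.log_exp]
    have hlb : 1 - 1 / t ≤ Real.log t := by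
      have := Real.log_le_sub_one_of_pos (show (0:ℝ) < 1 / t by positivity)
      rw [Real.log_div one_ne_zero (ne_of_gt htpos), Real.log_one] at this
      linarith
    have h2 : f (x, y) - Real.log (Z x)
        ≤ Real.log (P (x, y) / (Px x * Py y)) - (1 - 1 / t) := by
      rw [hlogt] at hlb; linarith
    have h3 := mul_le_mul_of_nonneg_left h2 (le_of_lt hP)
    have h4 : P (x, y) * (1 / t) = Px x * Py y * Real.exp (f (x, y)) / Z x := by
      rw [ht]
      field_simp
    rw [mul_sub, mul_sub, mul_sub, mul_one, h4] at h3
    rw [mul_sub]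
    linarith
  have h1 : ∑ x, ∑ y, P (x, y) = 1 := by
    rw [← hPsum, Fintype.sum_prod_type]
  have h2 : ∑ x, ∑ y, Px x * Py y * Real.exp (f (x, y)) / Z x = 1 := by
    have hx : ∀ x, ∑ y, Px x * Py y * Real.exp (f (x, y)) / Z x = Px x := by
      intro x
      have : ∑ y, Px x * Py y * Real.exp (f (x, y)) / Z x
          = Px x / Z x * ∑ y, Py y * Real.exp (f (x, y)) := by
        rw [Finset.mul_sum]; congr 1; ext y; ring
      rw [this]
      show Px x / Z x * Z x = Px x
      exact div_mul_cancel₀ _ (ne_of_gt (hZ x))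
    simp only [hx]
    exact h1
  calc ∑ x, ∑ y, P (x, y) * (f (x, y) - Real.log (Z x))
      ≤ ∑ x, ∑ y, (P (x, y) * Real.log (P (x, y) / (Px x * Py y))
          - (P (x, y) - Px x * Py y * Real.exp (f (x, y)) / Z x)) := by
        refine Finset.sum_le_sum fun x _ => Finset.sum_le_sum fun y _ => key x y
    _ = ∑ x, ∑ y, P (x, y) * Real.log (P (x, y) / (Px x * Py y)) := by
        simp only [Finset.sum_sub_distrib]
        rw [h1, h2]
        ring

lemma pc_aux_attain (P : 𝒳 × 𝒴 → ℝ) (hPpos : ∀ z, 0 < P z) (hPsum : ∑ z, P z = 1) :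
    -(∑ x, ∑ y, P (x, y) *
        (Real.log (P (x, y) / ((∑ y', P (x, y')) * (∑ x', P (x', y))))
          - Real.log (∑ y', (∑ x', P (x', y')) *
              Real.exp (Real.log (P (x, y') / ((∑ y'', P (x, y'')) * (∑ x'', P (x'', y'))))))))
      = -(∑ x, ∑ y, P (x, y) *
          Real.log (P (x, y) / ((∑ y', P (x, y')) * (∑ x', P (x', y))))) := by
  have hPx : ∀ x : 𝒳, 0 < ∑ y', P (x, y') :=
    fun x => Finset.sum_pos (fun y _ => hPpos _) univ_nonempty
  have hPy : ∀ y : 𝒴, 0 < ∑ x', P (x', y) :=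
    fun y => Finset.sum_pos (fun x _ => hPpos _) univ_nonempty
  have hZ : ∀ x : 𝒳, (∑ y', (∑ x', P (x', y')) *
      Real.exp (Real.log (P (x, y') / ((∑ y'', P (x, y'')) * (∑ x'', P (x'', y')))))) = 1 := by
    intro x
    have hterm : ∀ y' : 𝒴, (∑ x', P (x', y')) *
        Real.exp (Real.log (P (x, y') / ((∑ y'', P (x, y'')) * (∑ x'', P (x'', y')))))
        = P (x, y') / (∑ y'', P (x, y'')) := by
      intro y'
      rw [Real.exp_log (div_pos (hPpos _) (mul_pos (hPx x) (hPy y'))), ← div_div,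
        mul_comm, div_mul_cancel₀ _ (ne_of_gt (hPy y'))]
    simp only [hterm, ← Finset.sum_div]
    exact div_self (ne_of_gt (hPx x))
  congr 1
  refine Finset.sum_congr rfl fun x _ => Finset.sum_congr rfl fun y _ => ?_
  rw [hZ x, Real.log_one, sub_zero]

end Aux

/-- Theorem 2 (PC-softmax): the infimum over all `f : 𝒳 × 𝒴 → ℝ` of the
probability-corrected softmax cross-entropy loss equals `−I(X;Y)`, attained
by the pointwise mutual information `f*(x,y) = log (P(x,y)/(P_X(x)·P_Y(y)))`. -/
theorem pc_softmax_cross_entropy_inf_eq_neg_mi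
    {𝒳 𝒴 : Type*} [Fintype 𝒳] [Fintype 𝒴] [Nonempty 𝒳] [Nonempty 𝒴]
    (P : 𝒳 × 𝒴 → ℝ) (hPpos : ∀ z, 0 < P z) (hPsum : ∑ z, P z = 1) :
    sInf {r : ℝ | ∃ f : 𝒳 × 𝒴 → ℝ,
        r = -(∑ x, ∑ y, P (x, y) *
          (f (x, y) - Real.log (∑ y', (∑ x', P (x', y')) * Real.exp (f (x, y')))))}
      = -(∑ x, ∑ y, P (x, y) *
          Real.log (P (x, y) / ((∑ y', P (x, y')) * (∑ x', P (x', y)))))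
    ∧
    -(∑ x, ∑ y, P (x, y) *
        (Real.log (P (x, y) / ((∑ y', P (x, y')) * (∑ x', P (x', y))))
          - Real.log (∑ y', (∑ x', P (x', y')) *
              Real.exp (Real.log (P (x, y') / ((∑ y'', P (x, y'')) * (∑ x'', P (x'', y'))))))))
      = -(∑ x, ∑ y, P (x, y) *
          Real.log (P (x, y) / ((∑ y', P (x, y')) * (∑ x', P (x', y)))))
    ∧
    (∑ x, ∑ y, P (x, y) *
        Real.log (P (x, y) / ((∑ y', P (x, y')) * (∑ x', P (x', y)))))
      = -sInf {r : ℝ | ∃ f : 𝒳 × 𝒴 → ℝ,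
          r = -(∑ x, ∑ y, P (x, y) *
            (f (x, y) - Real.log (∑ y', (∑ x', P (x', y')) * Real.exp (f (x, y')))))} := by
  set I : ℝ := ∑ x, ∑ y, P (x, y) *
      Real.log (P (x, y) / ((∑ y', P (x, y')) * (∑ x', P (x', y)))) with hI
  set S : Set ℝ := {r : ℝ | ∃ f : 𝒳 × 𝒴 → ℝ,
      r = -(∑ x, ∑ y, P (x, y) *
        (f (x, y) - Real.log (∑ y', (∑ x', P (x', y')) * Real.exp (f (x, y')))))} with hS
  have hmem : -I ∈ S := by
    refine ⟨fun p => Real.log (P p / ((∑ y', P (p.1, y')) * (∑ x', P (x', p.2)))), ?_⟩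
    have := (pc_aux_attain P hPpos hPsum).symm
    simpa using this
  have hlb : ∀ r ∈ S, -I ≤ r := by
    rintro r ⟨f, rfl⟩
    have := pc_aux_lower P hPpos hPsum f
    simp only [hI]
    linarith
  have hinf : sInf S = -I :=
    le_antisymm (csInf_le ⟨-I, hlb⟩ hmem) (le_csInf ⟨-I, hmem⟩ hlb)
  refine ⟨hinf, pc_aux_attain P hPpos hPsum, ?_⟩
  rw [hinf, neg_neg]
end

section
/- (Gap bound from the proof of Lemma 1) For all functions f : 𝒳 × 𝒴 → ℝ, with f*(x,y) = log(P(x,y)/(P_X(x)·P_Y(y))), the estimation gap satisfies 0 ≤ I(X;Y) − Ĩ(f) ≤ Σ_{x,y} P(x,y)·|f*(x,y) − f(x,y)| + Σ_x Σ_y P_X(x)·P_Y(y)·|exp f(x,y) − exp f*(x,y)|. -/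
open Finset Real

theorem mi_gap_aux {𝒳 𝒴 : Type*} [Fintype 𝒳] [Fintype 𝒴] [Nonempty 𝒳] [Nonempty 𝒴]
    (P : 𝒳 × 𝒴 → ℝ) (PX : 𝒳 → ℝ) (PY : 𝒴 → ℝ)
    (hPpos : ∀ z, 0 < P z)
    (hPX : ∀ x, PX x = ∑ y, P (x, y)) (hPY : ∀ y, PY y = ∑ x, P (x, y))
    (f : 𝒳 × 𝒴 → ℝ) :
    0 ≤ (∑ x, ∑ y, P (x, y) * Real.log (P (x, y) / (PX x * PY y)))
        - (∑ x, ∑ y, P (x, y) *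
            (f (x, y) - Real.log (∑ y', PY y' * Real.exp (f (x, y')))))
    ∧
    (∑ x, ∑ y, P (x, y) * Real.log (P (x, y) / (PX x * PY y)))
        - (∑ x, ∑ y, P (x, y) *
            (f (x, y) - Real.log (∑ y', PY y' * Real.exp (f (x, y')))))
      ≤ (∑ x, ∑ y, P (x, y) * |Real.log (P (x, y) / (PX x * PY y)) - f (x, y)|)
        + (∑ x, ∑ y, PX x * PY y *
            |Real.exp (f (x, y)) - Real.exp (Real.log (P (x, y) / (PX x * PY y)))|) := by
  classical
  have hPXpos : ∀ x, 0 < PX x := fun x => by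
    rw [hPX]; exact Finset.sum_pos (fun y _ => hPpos _) Finset.univ_nonempty
  have hPYpos : ∀ y, 0 < PY y := fun y => by
    rw [hPY]; exact Finset.sum_pos (fun x _ => hPpos _) Finset.univ_nonempty
  have hexp : ∀ x y, Real.exp (Real.log (P (x, y) / (PX x * PY y)))
      = P (x, y) / (PX x * PY y) := fun x y =>
    Real.exp_log (div_pos (hPpos _) (mul_pos (hPXpos x) (hPYpos y)))
  have hSpos : ∀ x, 0 < ∑ y', PY y' * Real.exp (f (x, y')) := fun x =>
    Finset.sum_pos (fun y _ => mul_pos (hPYpos y) (Real.exp_pos _)) Finset.univ_nonempty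
  -- sum of PY y * exp f* = 1
  have hsum1 : ∀ x, ∑ y, PY y * Real.exp (Real.log (P (x, y) / (PX x * PY y))) = 1 := by
    intro x
    have key : ∀ y, PY y * Real.exp (Real.log (P (x, y) / (PX x * PY y)))
        = P (x, y) / PX x := by
      intro y
      have h1 : PX x ≠ 0 := (hPXpos x).ne'
      have h2 : PY y ≠ 0 := (hPYpos y).ne'
      rw [hexp]
      field_simp
    rw [Finset.sum_congr rfl (fun y _ => key y), ← Finset.sum_div, ← hPX,
      div_self (hPXpos x).ne']
  -- decomposition of the gap
  have hD : (∑ x, ∑ y, P (x, y) * Real.log (P (x, y) / (PX x * PY y)))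
        - (∑ x, ∑ y, P (x, y) *
            (f (x, y) - Real.log (∑ y', PY y' * Real.exp (f (x, y')))))
      = ∑ x, ((∑ y, P (x, y) * (Real.log (P (x, y) / (PX x * PY y)) - f (x, y)))
          + PX x * Real.log (∑ y', PY y' * Real.exp (f (x, y')))) := by
    rw [← Finset.sum_sub_distrib]
    refine Finset.sum_congr rfl fun x _ => ?_
    have h : (∑ y, P (x, y) * Real.log (P (x, y) / (PX x * PY y)))
        - (∑ y, P (x, y) *
            (f (x, y) - Real.log (∑ y', PY y' * Real.exp (f (x, y')))))
        - (∑ y, P (x, y) * (Real.log (P (x, y) / (PX x * PY y)) - f (x, y)))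
        = (∑ y, P (x, y)) * Real.log (∑ y', PY y' * Real.exp (f (x, y'))) := by
      rw [← Finset.sum_sub_distrib, ← Finset.sum_sub_distrib, Finset.sum_mul]
      exact Finset.sum_congr rfl fun y _ => by ring
    have h2 : PX x * Real.log (∑ y', PY y' * Real.exp (f (x, y')))
        = (∑ y, P (x, y)) * Real.log (∑ y', PY y' * Real.exp (f (x, y'))) := by
      rw [hPX]
    linarith [h, h2]
  -- key lower-bound inequality per x
  have hkey : ∀ x, 0 ≤ (∑ y, P (x, y) * (Real.log (P (x, y) / (PX x * PY y)) - f (x, y)))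
      + PX x * Real.log (∑ y', PY y' * Real.exp (f (x, y'))) := by
    intro x
    set S : ℝ := ∑ y', PY y' * Real.exp (f (x, y')) with hSdef
    have hS : 0 < S := hSpos x
    have hterm : ∀ y, P (x, y) * (f (x, y) - Real.log (P (x, y) / (PX x * PY y)))
        ≤ P (x, y) * Real.log S + PX x * (PY y * Real.exp (f (x, y))) / S - P (x, y) := by
      intro y
      have hu : 0 < Real.exp (f (x, y)) * PX x * PY y / P (x, y) :=
        div_pos (mul_pos (mul_pos (Real.exp_pos _) (hPXpos x)) (hPYpos y)) (hPpos _)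
      set u : ℝ := Real.exp (f (x, y)) * PX x * PY y / P (x, y) with hudef
      have hA : Real.log (P (x, y) / (PX x * PY y))
          = Real.log (P (x, y)) - (Real.log (PX x) + Real.log (PY y)) := by
        rw [Real.log_div (hPpos _).ne' (mul_pos (hPXpos x) (hPYpos y)).ne',
          Real.log_mul (hPXpos x).ne' (hPYpos y).ne']
      have hB : Real.log u
          = f (x, y) + Real.log (PX x) + Real.log (PY y) - Real.log (P (x, y)) := by
        rw [hudef,
          Real.log_div (mul_pos (mul_pos (Real.exp_pos _) (hPXpos x)) (hPYpos y)).ne'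
            (hPpos _).ne',
          Real.log_mul (mul_pos (Real.exp_pos _) (hPXpos x)).ne' (hPYpos y).ne',
          Real.log_mul (Real.exp_ne_zero _) (hPXpos x).ne', Real.log_exp]
      have hlogu : f (x, y) - Real.log (P (x, y) / (PX x * PY y)) = Real.log u := by
        rw [hA, hB]; ring
      have hlog : Real.log u ≤ Real.log S + (u / S - 1) := by
        have h1 : Real.log (u / S) ≤ u / S - 1 :=
          Real.log_le_sub_one_of_pos (div_pos hu hS)
        rw [Real.log_div hu.ne' hS.ne'] at h1
        linarith
      have h2 : P (x, y) * Real.log u ≤ P (x, y) * (Real.log S + (u / S - 1)) :=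
        mul_le_mul_of_nonneg_left hlog (hPpos _).le
      have hPu : P (x, y) * u = PX x * (PY y * Real.exp (f (x, y))) := by
        have hPne : P (x, y) ≠ 0 := (hPpos (x, y)).ne'
        rw [hudef]
        field_simp
      rw [hlogu]
      calc P (x, y) * Real.log u ≤ P (x, y) * (Real.log S + (u / S - 1)) := h2
        _ = P (x, y) * Real.log S + P (x, y) * u / S - P (x, y) := by ring
        _ = P (x, y) * Real.log S + PX x * (PY y * Real.exp (f (x, y))) / S - P (x, y) := by
            rw [hPu]
    have hsumterm : ∑ y, P (x, y) * (f (x, y) - Real.log (P (x, y) / (PX x * PY y)))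
        ≤ PX x * Real.log S := by
      calc ∑ y, P (x, y) * (f (x, y) - Real.log (P (x, y) / (PX x * PY y)))
          ≤ ∑ y, (P (x, y) * Real.log S + PX x * (PY y * Real.exp (f (x, y))) / S
              - P (x, y)) := Finset.sum_le_sum fun y _ => hterm y
        _ = (∑ y, P (x, y)) * Real.log S
            + (∑ y, PX x * (PY y * Real.exp (f (x, y)))) / S - ∑ y, P (x, y) := by
            rw [Finset.sum_sub_distrib, Finset.sum_add_distrib, Finset.sum_mul,
              Finset.sum_div]
        _ = PX x * Real.log S + PX x * S / S - PX x := by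
            rw [← hPX, ← Finset.mul_sum, ← hSdef]
        _ = PX x * Real.log S := by
            rw [mul_div_assoc, div_self hS.ne']; ring
    have e : (∑ y, P (x, y) * (Real.log (P (x, y) / (PX x * PY y)) - f (x, y)))
        + (∑ y, P (x, y) * (f (x, y) - Real.log (P (x, y) / (PX x * PY y)))) = 0 := by
      rw [← Finset.sum_add_distrib]
      exact Finset.sum_eq_zero fun y _ => by ring
    linarith [hsumterm, e]
  -- upper bound per x
  have hupper : ∀ x, (∑ y, P (x, y) * (Real.log (P (x, y) / (PX x * PY y)) - f (x, y)))
      + PX x * Real.log (∑ y', PY y' * Real.exp (f (x, y')))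
      ≤ (∑ y, P (x, y) * |Real.log (P (x, y) / (PX x * PY y)) - f (x, y)|)
        + (∑ y, PX x * PY y *
            |Real.exp (f (x, y)) - Real.exp (Real.log (P (x, y) / (PX x * PY y)))|) := by
    intro x
    set S : ℝ := ∑ y', PY y' * Real.exp (f (x, y')) with hSdef
    have hS : 0 < S := hSpos x
    have h1 : ∑ y, P (x, y) * (Real.log (P (x, y) / (PX x * PY y)) - f (x, y))
        ≤ ∑ y, P (x, y) * |Real.log (P (x, y) / (PX x * PY y)) - f (x, y)| :=
      Finset.sum_le_sum fun y _ =>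
        mul_le_mul_of_nonneg_left (le_abs_self _) (hPpos _).le
    have h2 : PX x * Real.log S ≤ PX x * (S - 1) :=
      mul_le_mul_of_nonneg_left (Real.log_le_sub_one_of_pos hS) (hPXpos x).le
    have h3 : PX x * (S - 1)
        = ∑ y, PX x * PY y *
            (Real.exp (f (x, y)) - Real.exp (Real.log (P (x, y) / (PX x * PY y)))) := by
      have e : ∑ y, PX x * PY y *
            (Real.exp (f (x, y)) - Real.exp (Real.log (P (x, y) / (PX x * PY y))))
          = PX x * S
            - PX x * ∑ y, PY y * Real.exp (Real.log (P (x, y) / (PX x * PY y))) := by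
        rw [hSdef, Finset.mul_sum, Finset.mul_sum, ← Finset.sum_sub_distrib]
        exact Finset.sum_congr rfl fun y _ => by ring
      rw [e, hsum1 x]; ring
    have h4 : ∑ y, PX x * PY y *
          (Real.exp (f (x, y)) - Real.exp (Real.log (P (x, y) / (PX x * PY y))))
        ≤ ∑ y, PX x * PY y *
          |Real.exp (f (x, y)) - Real.exp (Real.log (P (x, y) / (PX x * PY y)))| :=
      Finset.sum_le_sum fun y _ =>
        mul_le_mul_of_nonneg_left (le_abs_self _) (mul_pos (hPXpos x) (hPYpos y)).le
    have h5 : PX x * Real.log S ≤ ∑ y, PX x * PY y *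
        |Real.exp (f (x, y)) - Real.exp (Real.log (P (x, y) / (PX x * PY y)))| := by
      rw [h3] at h2
      exact le_trans h2 h4
    exact add_le_add h1 h5
  constructor
  · rw [hD]
    exact Finset.sum_nonneg fun x _ => hkey x
  · rw [hD, ← Finset.sum_add_distrib]
    exact Finset.sum_le_sum fun x _ => hupper x


/-- Gap bound from the proof of Lemma 1:
`0 ≤ I(X;Y) − Ĩ(f) ≤ E_P|f* − f| + E_{P_X}E_{P_Y}|exp f − exp f*|`. -/
theorem mi_estimation_gap_bound
    {𝒳 𝒴 : Type*} [Fintype 𝒳] [Fintype 𝒴] [Nonempty 𝒳] [Nonempty 𝒴]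
    (P : 𝒳 × 𝒴 → ℝ) (hPpos : ∀ z, 0 < P z) (hPsum : ∑ z, P z = 1)
    (f : 𝒳 × 𝒴 → ℝ) :
    0 ≤ (∑ x, ∑ y, P (x, y) *
          Real.log (P (x, y) / ((∑ y', P (x, y')) * (∑ x', P (x', y)))))
        - (∑ x, ∑ y, P (x, y) *
            (f (x, y) - Real.log (∑ y', (∑ x', P (x', y')) * Real.exp (f (x, y')))))
    ∧
    (∑ x, ∑ y, P (x, y) *
          Real.log (P (x, y) / ((∑ y', P (x, y')) * (∑ x', P (x', y)))))
        - (∑ x, ∑ y, P (x, y) *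
            (f (x, y) - Real.log (∑ y', (∑ x', P (x', y')) * Real.exp (f (x, y')))))
      ≤ (∑ x, ∑ y, P (x, y) *
          |Real.log (P (x, y) / ((∑ y', P (x, y')) * (∑ x', P (x', y)))) - f (x, y)|)
        + (∑ x, ∑ y, (∑ y', P (x, y')) * (∑ x', P (x', y)) *
            |Real.exp (f (x, y))
              - Real.exp (Real.log (P (x, y) / ((∑ y', P (x, y')) * (∑ x', P (x', y)))))|) := by
  exact mi_gap_aux P (fun x => ∑ y', P (x, y')) (fun y => ∑ x', P (x', y))
    hPpos (fun _ => rfl) (fun _ => rfl) f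
end

section
/- (Lemma 1, quantitative approximation) Let η > 0 and M > 0, let f*(x,y) = log(P(x,y)/(P_X(x)·P_Y(y))) and let f : 𝒳 × 𝒴 → ℝ be such that f(x,y) ≤ M and f*(x,y) ≤ M for all x, y. If Σ_{x,y} P(x,y)·|f*(x,y) − f(x,y)| ≤ η/2 and Σ_x Σ_y P_X(x)·P_Y(y)·|f(x,y) − f*(x,y)| ≤ (η/2)·exp(−M), then |I(X;Y) − Ĩ(f)| ≤ η. -/
open Finset Real

private lemma exp_sub_exp_le' {M a b : ℝ} (ha : a ≤ M) :
    Real.exp a - Real.exp b ≤ Real.exp M * |a - b| := by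
  rcases le_total a b with h | h
  · have h1 : Real.exp a ≤ Real.exp b := Real.exp_le_exp.2 h
    have h2 : (0:ℝ) ≤ Real.exp M * |a - b| := by positivity
    linarith
  · have h1 : 1 + (b - a) ≤ Real.exp (b - a) := by linarith [Real.add_one_le_exp (b - a)]
    have h2 : Real.exp b = Real.exp a * Real.exp (b - a) := by
      rw [← Real.exp_add]; ring_nf
    have h3 : Real.exp a ≤ Real.exp M := Real.exp_le_exp.2 ha
    have h4 : |a - b| = a - b := abs_of_nonneg (by linarith)
    rw [h4]
    nlinarith [Real.exp_pos a, Real.exp_pos M, Real.exp_pos (b - a)]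

private lemma exp_avg_le' {ι : Type*} [Fintype ι] (Q g : ι → ℝ) (hQ : ∀ i, 0 ≤ Q i)
    (hQsum : ∑ i, Q i = 1) :
    Real.exp (∑ i, Q i * g i) ≤ ∑ i, Q i * Real.exp (g i) := by
  set m := ∑ i, Q i * g i with hm
  have key : ∀ i ∈ Finset.univ, Q i * Real.exp m * (1 + (g i - m)) ≤ Q i * Real.exp (g i) := by
    intro i _
    have h1 : 1 + (g i - m) ≤ Real.exp (g i - m) := by linarith [Real.add_one_le_exp (g i - m)]
    have h3 : Real.exp m * Real.exp (g i - m) = Real.exp (g i) := by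
      rw [← Real.exp_add]; ring_nf
    have h2 : Real.exp m * (1 + (g i - m)) ≤ Real.exp (g i) := by
      rw [← h3]; exact mul_le_mul_of_nonneg_left h1 (Real.exp_pos m).le
    calc Q i * Real.exp m * (1 + (g i - m)) = Q i * (Real.exp m * (1 + (g i - m))) := by ring
      _ ≤ Q i * Real.exp (g i) := mul_le_mul_of_nonneg_left h2 (hQ i)
  have hsum : ∑ i, Q i * Real.exp m * (1 + (g i - m)) = Real.exp m := by
    have heach : ∀ i, Q i * Real.exp m * (1 + (g i - m))
        = Real.exp m * (Q i + Q i * g i - m * Q i) := fun i => by ring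
    simp_rw [heach, ← Finset.mul_sum]
    have : ∑ i, (Q i + Q i * g i - m * Q i) = 1 := by
      rw [Finset.sum_sub_distrib, Finset.sum_add_distrib, ← Finset.mul_sum, hQsum, ← hm]
      ring
    rw [this, mul_one]
  calc Real.exp m = ∑ i, Q i * Real.exp m * (1 + (g i - m)) := hsum.symm
    _ ≤ ∑ i, Q i * Real.exp (g i) := Finset.sum_le_sum key

private lemma mi_aux {𝒳 𝒴 : Type*} [Fintype 𝒳] [Fintype 𝒴] [Nonempty 𝒳] [Nonempty 𝒴]
    (P : 𝒳 × 𝒴 → ℝ) (PX : 𝒳 → ℝ) (PY : 𝒴 → ℝ) (fs : 𝒳 → 𝒴 → ℝ) (f : 𝒳 → 𝒴 → ℝ)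
    (S : 𝒳 → ℝ)
    (hPpos : ∀ z, 0 < P z)
    (hPX : ∀ x, PX x = ∑ y, P (x, y))
    (hPY : ∀ y, PY y = ∑ x, P (x, y))
    (hfs : ∀ x y, fs x y = Real.log (P (x, y) / (PX x * PY y)))
    (hS : ∀ x, S x = ∑ y', PY y' * Real.exp (f x y'))
    (η M : ℝ) (hη : 0 < η)
    (hfM : ∀ x y, f x y ≤ M)
    (h1 : (∑ x, ∑ y, P (x, y) * |fs x y - f x y|) ≤ η / 2)
    (h2 : (∑ x, ∑ y, PX x * PY y * |f x y - fs x y|) ≤ (η / 2) * Real.exp (-M)) :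
    |(∑ x, ∑ y, P (x, y) * fs x y)
      - (∑ x, ∑ y, P (x, y) * (f x y - Real.log (S x)))| ≤ η := by
  have hPXpos : ∀ x, 0 < PX x := fun x => by
    rw [hPX]; exact Finset.sum_pos (fun y _ => hPpos (x, y)) Finset.univ_nonempty
  have hPYpos : ∀ y, 0 < PY y := fun y => by
    rw [hPY]; exact Finset.sum_pos (fun x _ => hPpos (x, y)) Finset.univ_nonempty
  have hratio : ∀ x y, 0 < P (x, y) / (PX x * PY y) := fun x y =>
    div_pos (hPpos _) (mul_pos (hPXpos x) (hPYpos y))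
  have hexp_fs : ∀ x y, Real.exp (fs x y) = P (x, y) / (PX x * PY y) := fun x y => by
    rw [hfs]; exact Real.exp_log (hratio x y)
  have hQ : ∀ x y, PY y * Real.exp (fs x y) = P (x, y) / PX x := fun x y => by
    rw [hexp_fs]
    field_simp [(hPYpos y).ne', (hPXpos x).ne']
  have hT : ∀ x, ∑ y', PY y' * Real.exp (fs x y') = 1 := fun x => by
    simp_rw [hQ]
    rw [← Finset.sum_div, ← hPX, div_self (hPXpos x).ne']
  have hSpos : ∀ x, 0 < S x := fun x => by
    rw [hS]
    exact Finset.sum_pos (fun y _ => mul_pos (hPYpos y) (Real.exp_pos _)) Finset.univ_nonempty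
  set A := ∑ x, ∑ y, P (x, y) * (fs x y - f x y) with hA
  set B := ∑ x, PX x * Real.log (S x) with hB
  -- splitting
  have inner_eq : ∀ x, ∑ y, P (x, y) * Real.log (S x) = PX x * Real.log (S x) := fun x => by
    rw [hPX x, Finset.sum_mul]
  have hsplit : (∑ x, ∑ y, P (x, y) * fs x y)
      - (∑ x, ∑ y, P (x, y) * (f x y - Real.log (S x))) = A + B := by
    have e1 : ∀ x, ∑ y, P (x, y) * (f x y - Real.log (S x))
        = (∑ y, P (x, y) * f x y) - PX x * Real.log (S x) := fun x => by
      rw [← inner_eq x, ← Finset.sum_sub_distrib]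
      exact Finset.sum_congr rfl fun y _ => by ring
    have e2 : A = (∑ x, ∑ y, P (x, y) * fs x y) - (∑ x, ∑ y, P (x, y) * f x y) := by
      rw [hA, ← Finset.sum_sub_distrib]
      refine Finset.sum_congr rfl fun x _ => ?_
      rw [← Finset.sum_sub_distrib]
      exact Finset.sum_congr rfl fun y _ => by ring
    simp_rw [e1]
    rw [Finset.sum_sub_distrib, e2, hB]
    ring
  -- bound on A
  have hAabs : |A| ≤ η / 2 := by
    calc |A| ≤ ∑ x, |∑ y, P (x, y) * (fs x y - f x y)| := Finset.abs_sum_le_sum_abs _ _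
      _ ≤ ∑ x, ∑ y, |P (x, y) * (fs x y - f x y)| :=
          Finset.sum_le_sum fun x _ => Finset.abs_sum_le_sum_abs _ _
      _ = ∑ x, ∑ y, P (x, y) * |fs x y - f x y| := by
          refine Finset.sum_congr rfl fun x _ => Finset.sum_congr rfl fun y _ => ?_
          rw [abs_mul, abs_of_pos (hPpos (x, y))]
      _ ≤ η / 2 := h1
  -- upper bound on B
  have hBu : B ≤ η / 2 := by
    have step1 : ∀ x ∈ Finset.univ, PX x * Real.log (S x) ≤ PX x * (S x - 1) := fun x _ =>
      mul_le_mul_of_nonneg_left (Real.log_le_sub_one_of_pos (hSpos x)) (hPXpos x).le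
    have step2 : ∀ x, S x - 1
        = ∑ y, PY y * (Real.exp (f x y) - Real.exp (fs x y)) := fun x => by
      conv_lhs => rw [hS x, ← hT x]
      rw [← Finset.sum_sub_distrib]
      exact Finset.sum_congr rfl fun y _ => by ring
    calc B ≤ ∑ x, PX x * (S x - 1) := Finset.sum_le_sum step1
      _ = ∑ x, ∑ y, PX x * (PY y * (Real.exp (f x y) - Real.exp (fs x y))) := by
          refine Finset.sum_congr rfl fun x _ => ?_
          rw [step2 x, Finset.mul_sum]
      _ ≤ ∑ x, ∑ y, PX x * (PY y * (Real.exp M * |f x y - fs x y|)) := by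
          refine Finset.sum_le_sum fun x _ => Finset.sum_le_sum fun y _ => ?_
          exact mul_le_mul_of_nonneg_left
            (mul_le_mul_of_nonneg_left (exp_sub_exp_le' (hfM x y)) (hPYpos y).le)
            (hPXpos x).le
      _ = Real.exp M * ∑ x, ∑ y, PX x * PY y * |f x y - fs x y| := by
          rw [Finset.mul_sum]
          refine Finset.sum_congr rfl fun x _ => ?_
          rw [Finset.mul_sum]
          exact Finset.sum_congr rfl fun y _ => by ring
      _ ≤ Real.exp M * ((η / 2) * Real.exp (-M)) :=
          mul_le_mul_of_nonneg_left h2 (Real.exp_pos M).le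
      _ = η / 2 := by
          rw [show Real.exp M * ((η / 2) * Real.exp (-M))
              = (η / 2) * (Real.exp M * Real.exp (-M)) by ring,
            ← Real.exp_add, add_neg_cancel, Real.exp_zero, mul_one]
  -- lower bound on B
  have hBl : -A ≤ B := by
    have jensen : ∀ x ∈ Finset.univ,
        ∑ y, P (x, y) * (f x y - fs x y) ≤ PX x * Real.log (S x) := by
      intro x _
      have hQpos : ∀ y, 0 ≤ P (x, y) / PX x := fun y =>
        (div_pos (hPpos _) (hPXpos x)).le
      have hQsum : ∑ y, P (x, y) / PX x = 1 := by
        rw [← Finset.sum_div, ← hPX, div_self (hPXpos x).ne']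
      have hSalt : S x = ∑ y, (P (x, y) / PX x) * Real.exp (f x y - fs x y) := by
        rw [hS x]
        refine Finset.sum_congr rfl fun y _ => ?_
        rw [← hQ x y, Real.exp_sub]
        field_simp
      have hlog : ∑ y, (P (x, y) / PX x) * (f x y - fs x y) ≤ Real.log (S x) := by
        rw [Real.le_log_iff_exp_le (hSpos x), hSalt]
        exact exp_avg_le' _ _ hQpos hQsum
      have heq : PX x * ∑ y, (P (x, y) / PX x) * (f x y - fs x y)
          = ∑ y, P (x, y) * (f x y - fs x y) := by
        rw [Finset.mul_sum]
        refine Finset.sum_congr rfl fun y _ => ?_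
        field_simp [(hPXpos x).ne']
      calc ∑ y, P (x, y) * (f x y - fs x y)
          = PX x * ∑ y, (P (x, y) / PX x) * (f x y - fs x y) := heq.symm
        _ ≤ PX x * Real.log (S x) := mul_le_mul_of_nonneg_left hlog (hPXpos x).le
    have hnegA : -A = ∑ x, ∑ y, P (x, y) * (f x y - fs x y) := by
      rw [hA, ← Finset.sum_neg_distrib]
      refine Finset.sum_congr rfl fun x _ => ?_
      rw [← Finset.sum_neg_distrib]
      exact Finset.sum_congr rfl fun y _ => by ring
    rw [hnegA, hB]
    exact Finset.sum_le_sum jensen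
  rw [hsplit]
  have h1' := abs_le.1 hAabs
  rw [abs_le]
  constructor <;> linarith

/-- Lemma 1 (quantitative approximation): if `f` and `f*` are bounded above by
`M`, `E_P|f* − f| ≤ η/2` and `E_{P_X}E_{P_Y}|f − f*| ≤ (η/2)·exp(−M)`, then
`|I(X;Y) − Ĩ(f)| ≤ η`. -/
theorem mi_quantitative_approximation
    {𝒳 𝒴 : Type*} [Fintype 𝒳] [Fintype 𝒴] [Nonempty 𝒳] [Nonempty 𝒴]
    (P : 𝒳 × 𝒴 → ℝ) (hPpos : ∀ z, 0 < P z) (hPsum : ∑ z, P z = 1)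
    (η M : ℝ) (hη : 0 < η) (hM : 0 < M)
    (f : 𝒳 × 𝒴 → ℝ)
    (hfM : ∀ x y, f (x, y) ≤ M)
    (hfstarM : ∀ x y,
      Real.log (P (x, y) / ((∑ y', P (x, y')) * (∑ x', P (x', y)))) ≤ M)
    (h1 : (∑ x, ∑ y, P (x, y) *
        |Real.log (P (x, y) / ((∑ y', P (x, y')) * (∑ x', P (x', y)))) - f (x, y)|)
      ≤ η / 2)
    (h2 : (∑ x, ∑ y, (∑ y', P (x, y')) * (∑ x', P (x', y)) *
        |f (x, y) - Real.log (P (x, y) / ((∑ y', P (x, y')) * (∑ x', P (x', y))))|)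
      ≤ (η / 2) * Real.exp (-M)) :
    |(∑ x, ∑ y, P (x, y) *
        Real.log (P (x, y) / ((∑ y', P (x, y')) * (∑ x', P (x', y)))))
      - (∑ x, ∑ y, P (x, y) *
          (f (x, y) - Real.log (∑ y', (∑ x', P (x', y')) * Real.exp (f (x, y')))))|
      ≤ η := by
  exact mi_aux P (fun x => ∑ y', P (x, y')) (fun y => ∑ x', P (x', y))
    (fun x y => Real.log (P (x, y) / ((∑ y', P (x, y')) * (∑ x', P (x', y)))))
    (fun x y => f (x, y))
    (fun x => ∑ y', (∑ x', P (x', y')) * Real.exp (f (x, y')))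
    hPpos (fun _ => rfl) (fun _ => rfl) (fun _ _ => rfl) (fun _ => rfl)
    η M hη (fun x y => hfM x y) h1 h2
end
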